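/- arXiv:1901.05118 — 3 statements merged into one kernel-verified Lean document; each statement's English description precedes it below -/
import Mathlib

section
/- Suppose u is smooth with bounded derivatives, A is C², and the grid solutions satisfy u^i(x) = u(x) + A(x)h_i² + R_i(x) with |R_i| ≤ M h₀⁴ at the points x_j, x_{j+1}, x_{j+1/2} = x_j + h₀/2, h₀ = x_{j+1} - x_j, h_i = h₀/2^i. Then the midpoint extrapolation formula ũ¹_{j+1/2} := u¹(x_{j+1/2}) + (1/6)(u¹(x_j) - u⁰(x_j) + u¹(x_{j+1}) - u⁰(x_{j+1})) satisfies |ũ¹_{j+1/2} - u(x_{j+1/2})| ≤ C h₀⁴, where C depends only on M and sup|A''| on [x_j, x_{j+1}]. -/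
/-!
Subtracting the two expansions at a coarse node cancels `u` and leaves `-(3/4) A h₀²` up to
`O(h₀⁴)`, so the correction `1/6 (u¹ - u⁰)` summed over both nodes replaces the error term
`A(m) h₀²/4` of `u¹(m)` by `h₀²/4 · (A(m) - (A(xⱼ) + A(xⱼ₊₁))/2)`. This midpoint defect of `A` is
`O(h₀²)` by first-order Taylor expansion of `A` at `xⱼ`.
-/

open Set

lemma abs_sub_sub_derivWithin_mul_le {f : ℝ → ℝ} {a b x K : ℝ}
    (hf : ContDiffOn ℝ 2 f (Icc a b))
    (hf'' : ∀ y ∈ Icc a b, |iteratedDerivWithin 2 f (Icc a b) y| ≤ K) (hx : x ∈ Icc a b) :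
    |f x - f a - derivWithin f (Icc a b) a * (x - a)| ≤ K * (x - a) ^ 2 := by
  have h := taylor_mean_remainder_bound (n := 1) (hx.1.trans hx.2) hf hx hf''
  simpa [taylor_within_apply, Finset.sum_range_succ, iteratedDerivWithin_one, sub_sub,
    mul_comm] using h

lemma abs_midpoint_sub_average_le {f : ℝ → ℝ} {a h K : ℝ} (hh : 0 ≤ h)
    (hf : ContDiffOn ℝ 2 f (Icc a (a + h)))
    (hf'' : ∀ y ∈ Icc a (a + h), |iteratedDerivWithin 2 f (Icc a (a + h)) y| ≤ K) :
    |f (a + h / 2) - (f a + f (a + h)) / 2| ≤ 3 / 4 * K * h ^ 2 := by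
  have hmid := abs_sub_sub_derivWithin_mul_le hf hf'' (x := a + h / 2) ⟨by linarith, by linarith⟩
  have hend := abs_sub_sub_derivWithin_mul_le hf hf'' (x := a + h) ⟨by linarith, le_rfl⟩
  rw [add_sub_cancel_left] at hmid hend
  rw [abs_le] at hmid hend ⊢
  constructor <;> nlinarith [hmid.1, hmid.2, hend.1, hend.2]

theorem midpoint_extrapolation_true_general
    (u u0 u1 A R0 R1 : ℝ → ℝ) (xj h₀ M K : ℝ)
    (hh : 0 < h₀)
    (hA : ContDiffOn ℝ 2 A (Set.Icc xj (xj + h₀)))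
    (hA'' : ∀ y ∈ Set.Icc xj (xj + h₀),
      |iteratedDerivWithin 2 A (Set.Icc xj (xj + h₀)) y| ≤ K)
    (hu0 : ∀ x ∈ ({xj, xj + h₀} : Set ℝ),
      u0 x = u x + A x * h₀ ^ 2 + R0 x)
    (hu1 : ∀ x ∈ ({xj, xj + h₀ / 2, xj + h₀} : Set ℝ),
      u1 x = u x + A x * (h₀ / 2) ^ 2 + R1 x)
    (hR0 : ∀ x ∈ ({xj, xj + h₀} : Set ℝ), |R0 x| ≤ M * h₀ ^ 4)
    (hR1 : ∀ x ∈ ({xj, xj + h₀ / 2, xj + h₀} : Set ℝ), |R1 x| ≤ M * h₀ ^ 4) :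
    |u1 (xj + h₀ / 2) + 1 / 6 * (u1 xj - u0 xj + u1 (xj + h₀) - u0 (xj + h₀))
      - u (xj + h₀ / 2)| ≤ (K + 2 * M) * h₀ ^ 4 := by
  have hK : 0 ≤ K := (abs_nonneg _).trans (hA'' xj ⟨le_rfl, by linarith⟩)
  have hM : 0 ≤ M * h₀ ^ 4 := (abs_nonneg _).trans (hR0 xj (by simp))
  have hdefect := abs_midpoint_sub_average_le hh.le hA hA''
  have hremainder : |R1 (xj + h₀ / 2) + (R1 xj - R0 xj + R1 (xj + h₀) - R0 (xj + h₀)) / 6|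
      ≤ 5 / 3 * (M * h₀ ^ 4) := by
    have h1l := abs_le.mp (hR1 xj (by simp))
    have h1m := abs_le.mp (hR1 (xj + h₀ / 2) (by simp))
    have h1r := abs_le.mp (hR1 (xj + h₀) (by simp))
    have h0l := abs_le.mp (hR0 xj (by simp))
    have h0r := abs_le.mp (hR0 (xj + h₀) (by simp))
    rw [abs_le]
    constructor <;> linarith [h1l.1, h1l.2, h1m.1, h1m.2, h1r.1, h1r.2, h0l.1, h0l.2, h0r.1, h0r.2]
  rw [hu1 xj (by simp), hu1 (xj + h₀ / 2) (by simp), hu1 (xj + h₀) (by simp),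
    hu0 xj (by simp), hu0 (xj + h₀) (by simp)]
  calc _ = |(h₀ / 2) ^ 2 * (A (xj + h₀ / 2) - (A xj + A (xj + h₀)) / 2)
          + (R1 (xj + h₀ / 2) + (R1 xj - R0 xj + R1 (xj + h₀) - R0 (xj + h₀)) / 6)| := by
        ring_nf
    _ ≤ (h₀ / 2) ^ 2 * (3 / 4 * K * h₀ ^ 2) + 5 / 3 * (M * h₀ ^ 4) := by
        grw [abs_add_le, abs_mul, abs_of_nonneg (by positivity : (0 : ℝ) ≤ (h₀ / 2) ^ 2),
          hdefect, hremainder]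
    _ ≤ (K + 2 * M) * h₀ ^ 4 := by nlinarith [pow_nonneg hh.le 4]

/-- Midpoint extrapolation formula for the true solution: with error expansions
`uⁱ = u + A hᵢ² + Rᵢ` (`hᵢ = h₀/2ⁱ`, `|Rᵢ| ≤ M h₀⁴`) at the nodes `xⱼ`,
`xⱼ + h₀/2`, `xⱼ + h₀` and `A` of class C² with `|A''| ≤ K`, the formula
`ũ¹ = u¹(m) + (1/6)(u¹(xⱼ) - u⁰(xⱼ) + u¹(xⱼ₊₁) - u⁰(xⱼ₊₁))` is a fourth-order
approximation of `u(m)` at the midpoint `m = xⱼ + h₀/2`. -/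
theorem midpoint_extrapolation_true
    (u u0 u1 A R0 R1 : ℝ → ℝ) (xj h₀ M K : ℝ)
    (hh : 0 < h₀) (hM : 0 < M) (hK : 0 ≤ K)
    (hA : ContDiffOn ℝ 2 A (Set.Icc xj (xj + h₀)))
    (hA'' : ∀ y ∈ Set.Icc xj (xj + h₀),
      |iteratedDerivWithin 2 A (Set.Icc xj (xj + h₀)) y| ≤ K)
    (hu0 : ∀ x ∈ ({xj, xj + h₀} : Set ℝ),
      u0 x = u x + A x * h₀ ^ 2 + R0 x)
    (hu1 : ∀ x ∈ ({xj, xj + h₀ / 2, xj + h₀} : Set ℝ),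
      u1 x = u x + A x * (h₀ / 2) ^ 2 + R1 x)
    (hR0 : ∀ x ∈ ({xj, xj + h₀} : Set ℝ), |R0 x| ≤ M * h₀ ^ 4)
    (hR1 : ∀ x ∈ ({xj, xj + h₀ / 2, xj + h₀} : Set ℝ), |R1 x| ≤ M * h₀ ^ 4) :
    |u1 (xj + h₀ / 2) + 1 / 6 * (u1 xj - u0 xj + u1 (xj + h₀) - u0 (xj + h₀))
      - u (xj + h₀ / 2)| ≤ (K + 2 * M) * h₀ ^ 4 :=
  midpoint_extrapolation_true_general u u0 u1 A R0 R1 xj h₀ M K hh hA hA'' hu0 hu1 hR0 hR1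
end

section
/- Under the same hypotheses as the midpoint extrapolation lemma (error expansions with C² coefficient A), the formula w²_{j+1/2} := u¹(x_{j+1/2}) + (1/8)(u¹(x_j) - u⁰(x_j) + u¹(x_{j+1}) - u⁰(x_{j+1})) satisfies |w²_{j+1/2} - u²(x_{j+1/2})| ≤ C h₀⁴, where u² is the solution on the grid of size h₂ = h₀/4 obeying the same error expansion. -/
/-!
Substituting the three error expansions, the leading terms `u` cancel and the `h₀²`-terms
combine to `-(3/32) h₀² (A(xⱼ) + A(xⱼ₊₁) - 2 A(xⱼ₊₁/₂))`. This second difference of `A` is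
`O(h₀²)` by Taylor's theorem, so both it and the remainders `Rᵢ` contribute `O(h₀⁴)`.
-/

open Set

lemma abs_sub_linear_taylor_le {f : ℝ → ℝ} {a b C x : ℝ} (hab : a ≤ b)
    (hf : ContDiffOn ℝ 2 f (Icc a b)) (hx : x ∈ Icc a b)
    (hC : ∀ y ∈ Icc a b, |iteratedDerivWithin 2 f (Icc a b) y| ≤ C) :
    |f x - f a - derivWithin f (Icc a b) a * (x - a)| ≤ C * (x - a) ^ 2 := by
  have h := taylor_mean_remainder_bound (n := 1) hab hf hx hC
  simpa [taylor_within_zero_eval, iteratedDerivWithin_one, sub_sub, mul_comm] using h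

lemma abs_second_diff_midpoint_le {f : ℝ → ℝ} {a h C : ℝ} (hh : 0 ≤ h)
    (hf : ContDiffOn ℝ 2 f (Icc a (a + h)))
    (hC : ∀ y ∈ Icc a (a + h), |iteratedDerivWithin 2 f (Icc a (a + h)) y| ≤ C) :
    |f a + f (a + h) - 2 * f (a + h / 2)| ≤ 3 / 2 * C * h ^ 2 := by
  have hab : a ≤ a + h := by linarith
  have hend := abs_sub_linear_taylor_le hab hf (right_mem_Icc.2 hab) hC
  have hmid := abs_sub_linear_taylor_le hab hf
    (⟨by linarith, by linarith⟩ : a + h / 2 ∈ Icc a (a + h)) hC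
  set d := derivWithin f (Icc a (a + h)) a
  have hsplit : f a + f (a + h) - 2 * f (a + h / 2)
      = (f (a + h) - f a - d * (a + h - a)) - 2 * (f (a + h / 2) - f a - d * (a + h / 2 - a)) := by
    ring
  rw [hsplit]
  calc _ ≤ |f (a + h) - f a - d * (a + h - a)|
        + 2 * |f (a + h / 2) - f a - d * (a + h / 2 - a)| := by
          refine (abs_sub _ _).trans ?_
          rw [abs_mul, abs_two]
    _ ≤ C * (a + h - a) ^ 2 + 2 * (C * (a + h / 2 - a) ^ 2) := by gcongr
    _ = 3 / 2 * C * h ^ 2 := by ring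

lemma abs_extrapolation_remainder_le {r0a r0b r1a r1m r1b r2 ε : ℝ}
    (h0a : |r0a| ≤ ε) (h0b : |r0b| ≤ ε) (h1a : |r1a| ≤ ε) (h1m : |r1m| ≤ ε) (h1b : |r1b| ≤ ε)
    (h2 : |r2| ≤ ε) :
    |r1m + 1 / 8 * (r1a - r0a + r1b - r0b) - r2| ≤ 5 / 2 * ε := by
  rw [abs_le] at *
  constructor <;> linarith

theorem midpoint_extrapolation_fd_general
    (u u0 u1 u2 A R0 R1 R2 : ℝ → ℝ) (xj h₀ M K : ℝ)
    (hh : 0 < h₀)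
    (hA : ContDiffOn ℝ 2 A (Set.Icc xj (xj + h₀)))
    (hA'' : ∀ y ∈ Set.Icc xj (xj + h₀),
      |iteratedDerivWithin 2 A (Set.Icc xj (xj + h₀)) y| ≤ K)
    (hu0 : ∀ x ∈ ({xj, xj + h₀} : Set ℝ),
      u0 x = u x + A x * h₀ ^ 2 + R0 x)
    (hu1 : ∀ x ∈ ({xj, xj + h₀ / 2, xj + h₀} : Set ℝ),
      u1 x = u x + A x * (h₀ / 2) ^ 2 + R1 x)
    (hu2 : u2 (xj + h₀ / 2) = u (xj + h₀ / 2)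
      + A (xj + h₀ / 2) * (h₀ / 4) ^ 2 + R2 (xj + h₀ / 2))
    (hR0 : ∀ x ∈ ({xj, xj + h₀} : Set ℝ), |R0 x| ≤ M * h₀ ^ 4)
    (hR1 : ∀ x ∈ ({xj, xj + h₀ / 2, xj + h₀} : Set ℝ), |R1 x| ≤ M * h₀ ^ 4)
    (hR2 : |R2 (xj + h₀ / 2)| ≤ M * h₀ ^ 4) :
    |u1 (xj + h₀ / 2) + 1 / 8 * (u1 xj - u0 xj + u1 (xj + h₀) - u0 (xj + h₀))
      - u2 (xj + h₀ / 2)| ≤ (K + 3 * M) * h₀ ^ 4 := by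
  set m := xj + h₀ / 2
  set b := xj + h₀
  have hK : 0 ≤ K := (abs_nonneg _).trans (hA'' xj (left_mem_Icc.2 (by linarith)))
  have hMh : 0 ≤ M * h₀ ^ 4 := (abs_nonneg _).trans hR2
  have hD := abs_second_diff_midpoint_le hh.le hA hA''
  have hR := abs_extrapolation_remainder_le (hR0 xj (by simp)) (hR0 b (by simp))
    (hR1 xj (by simp)) (hR1 m (by simp)) (hR1 b (by simp)) hR2
  have hexpand : u1 m + 1 / 8 * (u1 xj - u0 xj + u1 b - u0 b) - u2 m
      = -(3 / 32 * h₀ ^ 2) * (A xj + A b - 2 * A m)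
        + (R1 m + 1 / 8 * (R1 xj - R0 xj + R1 b - R0 b) - R2 m) := by
    rw [hu0 xj (by simp), hu0 b (by simp), hu1 xj (by simp), hu1 m (by simp), hu1 b (by simp),
      hu2]
    ring
  rw [hexpand]
  calc _ ≤ 3 / 32 * h₀ ^ 2 * |A xj + A b - 2 * A m|
        + |R1 m + 1 / 8 * (R1 xj - R0 xj + R1 b - R0 b) - R2 m| := by
          refine (abs_add_le _ _).trans_eq ?_
          rw [abs_mul, abs_neg, abs_of_nonneg (by positivity)]
    _ ≤ 3 / 32 * h₀ ^ 2 * (3 / 2 * K * h₀ ^ 2) + 5 / 2 * (M * h₀ ^ 4) := by gcongr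
    _ ≤ (K + 3 * M) * h₀ ^ 4 := by nlinarith [mul_nonneg hK (pow_nonneg hh.le 4)]

/-- Midpoint extrapolation towards the finite difference solution `u²` on the
grid of size `h₀/4`: under the same hypotheses as the midpoint extrapolation
lemma, `w² = u¹(m) + (1/8)(u¹(xⱼ) - u⁰(xⱼ) + u¹(xⱼ₊₁) - u⁰(xⱼ₊₁))` is a
fourth-order approximation of `u²(m)` at the midpoint `m = xⱼ + h₀/2`. -/
theorem midpoint_extrapolation_fd
    (u u0 u1 u2 A R0 R1 R2 : ℝ → ℝ) (xj h₀ M K : ℝ)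
    (hh : 0 < h₀) (hM : 0 < M) (hK : 0 ≤ K)
    (hA : ContDiffOn ℝ 2 A (Set.Icc xj (xj + h₀)))
    (hA'' : ∀ y ∈ Set.Icc xj (xj + h₀),
      |iteratedDerivWithin 2 A (Set.Icc xj (xj + h₀)) y| ≤ K)
    (hu0 : ∀ x ∈ ({xj, xj + h₀} : Set ℝ),
      u0 x = u x + A x * h₀ ^ 2 + R0 x)
    (hu1 : ∀ x ∈ ({xj, xj + h₀ / 2, xj + h₀} : Set ℝ),
      u1 x = u x + A x * (h₀ / 2) ^ 2 + R1 x)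
    (hu2 : u2 (xj + h₀ / 2) = u (xj + h₀ / 2)
      + A (xj + h₀ / 2) * (h₀ / 4) ^ 2 + R2 (xj + h₀ / 2))
    (hR0 : ∀ x ∈ ({xj, xj + h₀} : Set ℝ), |R0 x| ≤ M * h₀ ^ 4)
    (hR1 : ∀ x ∈ ({xj, xj + h₀ / 2, xj + h₀} : Set ℝ), |R1 x| ≤ M * h₀ ^ 4)
    (hR2 : |R2 (xj + h₀ / 2)| ≤ M * h₀ ^ 4) :
    |u1 (xj + h₀ / 2) + 1 / 8 * (u1 xj - u0 xj + u1 (xj + h₀) - u0 (xj + h₀))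
      - u2 (xj + h₀ / 2)| ≤ (K + 3 * M) * h₀ ^ 4 :=
  midpoint_extrapolation_fd_general u u0 u1 u2 A R0 R1 R2 xj h₀ M K hh hA hA'' hu0 hu1 hu2 hR0 hR1
    hR2
end

section
/- For u(x,y,z) = x⁴ (or y⁴ or z⁴), the 25-point stencil applied at any point P with mesh size h yields 24h⁴ = h⁴·(∂⁴u/∂x⁴); more generally, for any polynomial u of total degree ≤ 5, the 25-point stencil value at P equals h⁴·(Δ²u)(P). -/
/-- Evaluation of a trivariate polynomial at a point of `ℝ³`. -/
noncomputable def evalP3 (p : MvPolynomial (Fin 3) ℝ) (a b c : ℝ) : ℝ :=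
  MvPolynomial.eval ![a, b, c] p

/-- The biharmonic operator `Δ² = ∂⁴ₓ + ∂⁴ᵧ + ∂⁴_z + 2∂²ₓ∂²ᵧ + 2∂²ₓ∂²_z + 2∂²ᵧ∂²_z`
acting on trivariate polynomials. -/
noncomputable def biharmPoly (p : MvPolynomial (Fin 3) ℝ) : MvPolynomial (Fin 3) ℝ :=
  (MvPolynomial.pderiv 0)^[4] p + (MvPolynomial.pderiv 1)^[4] p
    + (MvPolynomial.pderiv 2)^[4] p
    + 2 * (MvPolynomial.pderiv 0)^[2] ((MvPolynomial.pderiv 1)^[2] p)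
    + 2 * (MvPolynomial.pderiv 0)^[2] ((MvPolynomial.pderiv 2)^[2] p)
    + 2 * (MvPolynomial.pderiv 1)^[2] ((MvPolynomial.pderiv 2)^[2] p)

/-!
Both sides are linear in `p`, so it suffices to treat a monomial `a xⁱ yʲ zᵏ` with `i + j + k ≤ 5`.
The stencil is `δₓ⁴ + δᵧ⁴ + δ_z⁴ + 2 (δₓ²δᵧ² + δₓ²δ_z² + δᵧ²δ_z²)` with `δ²`, `δ⁴` the central
second and fourth differences, and on a product `f(x) g(y) k(z)` it factors into one-dimensional
differences. These are exact on low powers: `δ⁴ tⁿ = h⁴ (tⁿ)⁗` for `n ≤ 5` and `δ² tⁿ = h² (tⁿ)''`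
for `n ≤ 3`.
-/

open MvPolynomial

section FiniteDifferences

variable {R : Type*} [CommRing R]

def secondDiff (f : R → R) (x h : R) : R := f (x + h) - 2 * f x + f (x - h)

def fourthDiff (f : R → R) (x h : R) : R :=
  f (x + 2 * h) - 4 * f (x + h) + 6 * f x - 4 * f (x - h) + f (x - 2 * h)

theorem secondDiff_pow_of_le_three {n : ℕ} (hn : n ≤ 3) (x h : R) :
    secondDiff (· ^ n) x h = h ^ 2 * n.descFactorial 2 * x ^ (n - 2) := by
  interval_cases n <;> simp [secondDiff, Nat.descFactorial] <;> ring

theorem fourthDiff_pow_of_le_five {n : ℕ} (hn : n ≤ 5) (x h : R) :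
    fourthDiff (· ^ n) x h = h ^ 4 * n.descFactorial 4 * x ^ (n - 4) := by
  interval_cases n <;> simp [fourthDiff, Nat.descFactorial] <;> ring

theorem secondDiff_pow_mul_secondDiff_pow {i j : ℕ} (hij : i + j ≤ 5) (x y h : R) :
    secondDiff (· ^ i) x h * secondDiff (· ^ j) y h =
      h ^ 4 * (i.descFactorial 2 * x ^ (i - 2)) * (j.descFactorial 2 * y ^ (j - 2)) := by
  -- Either both exponents are at most 3, where `δ²` is exact, or one is at most 1 and both sides vanish.
  rcases (by omega : i ≤ 3 ∧ j ≤ 3 ∨ i ≤ 1 ∨ j ≤ 1) with ⟨hi, hj⟩ | hi | hj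
  · rw [secondDiff_pow_of_le_three hi, secondDiff_pow_of_le_three hj]
    ring
  · rw [secondDiff_pow_of_le_three (n := i) (by omega), Nat.descFactorial_eq_zero_iff_lt.2 (by omega)]
    simp
  · rw [secondDiff_pow_of_le_three (n := j) (by omega), Nat.descFactorial_eq_zero_iff_lt.2 (by omega)]
    simp

def stencil25 (u : R → R → R → R) (x y z h : R) : R :=
  42 * u x y z
      - 12 * (u (x + h) y z + u (x - h) y z
            + u x (y + h) z + u x (y - h) z
            + u x y (z + h) + u x y (z - h))
      + (u (x + 2 * h) y z + u (x - 2 * h) y z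
       + u x (y + 2 * h) z + u x (y - 2 * h) z
       + u x y (z + 2 * h) + u x y (z - 2 * h))
      + 2 * (u (x + h) (y + h) z + u (x + h) (y - h) z
           + u (x - h) (y + h) z + u (x - h) (y - h) z
           + u (x + h) y (z + h) + u (x + h) y (z - h)
           + u (x - h) y (z + h) + u (x - h) y (z - h)
           + u x (y + h) (z + h) + u x (y + h) (z - h)
           + u x (y - h) (z + h) + u x (y - h) (z - h))

theorem stencil25_sum {ι : Type*} (t : Finset ι) (u : ι → R → R → R → R) (x y z h : R) :
    stencil25 (fun a b c => ∑ i ∈ t, u i a b c) x y z h = ∑ i ∈ t, stencil25 (u i) x y z h := by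
  simp only [stencil25, Finset.sum_add_distrib, Finset.sum_sub_distrib, ← Finset.mul_sum]

theorem stencil25_const_mul (c : R) (u : R → R → R → R) (x y z h : R) :
    stencil25 (fun a b d => c * u a b d) x y z h = c * stencil25 u x y z h := by
  simp only [stencil25]; ring

theorem stencil25_mul (f g k : R → R) (x y z h : R) :
    stencil25 (fun a b c => f a * g b * k c) x y z h =
      fourthDiff f x h * g y * k z + f x * fourthDiff g y h * k z + f x * g y * fourthDiff k z h
        + 2 * (secondDiff f x h * secondDiff g y h * k z + secondDiff f x h * secondDiff k z h * g y
          + secondDiff g y h * secondDiff k z h * f x) := by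
  simp only [stencil25, fourthDiff, secondDiff]; ring

end FiniteDifferences

theorem pderiv_iterate_monomial {R σ : Type*} [CommSemiring R] (i : σ) (n : ℕ) (s : σ →₀ ℕ) (a : R) :
    (pderiv i)^[n] (monomial s a) = monomial (s - Finsupp.single i n) (a * (s i).descFactorial n) := by
  induction n with
  | zero => simp
  | succ n ih =>
    rw [Function.iterate_succ_apply', ih, pderiv_monomial, tsub_tsub, ← Finsupp.single_add,
      Finsupp.tsub_apply, Finsupp.single_eq_same, Nat.descFactorial_succ, mul_assoc]
    push_cast
    ring_nf

theorem biharmPoly_add (p q : MvPolynomial (Fin 3) ℝ) :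
    biharmPoly (p + q) = biharmPoly p + biharmPoly q := by
  simp only [biharmPoly, iterate_map_add]; ring

theorem biharmPoly_sum {ι : Type*} (t : Finset ι) (f : ι → MvPolynomial (Fin 3) ℝ) :
    biharmPoly (∑ i ∈ t, f i) = ∑ i ∈ t, biharmPoly (f i) :=
  map_sum (AddMonoidHom.mk' biharmPoly biharmPoly_add) f t

theorem eval_vecCons_monomial {R : Type*} [CommSemiring R] (s : Fin 3 →₀ ℕ) (a x y z : R) :
    eval ![x, y, z] (monomial s a) = a * (x ^ s 0 * y ^ s 1 * z ^ s 2) := by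
  simp [eval_monomial, Finsupp.prod_fintype, Fin.prod_univ_three, mul_assoc]

theorem evalP3_sum {ι : Type*} (t : Finset ι) (f : ι → MvPolynomial (Fin 3) ℝ) (x y z : ℝ) :
    evalP3 (∑ i ∈ t, f i) x y z = ∑ i ∈ t, evalP3 (f i) x y z :=
  map_sum _ _ _

theorem evalP3_biharmPoly_monomial (s : Fin 3 →₀ ℕ) (a x y z : ℝ) :
    evalP3 (biharmPoly (monomial s a)) x y z = a *
      ((s 0).descFactorial 4 * x ^ (s 0 - 4) * y ^ s 1 * z ^ s 2
        + x ^ s 0 * ((s 1).descFactorial 4 * y ^ (s 1 - 4)) * z ^ s 2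
        + x ^ s 0 * y ^ s 1 * ((s 2).descFactorial 4 * z ^ (s 2 - 4))
        + 2 * ((s 0).descFactorial 2 * x ^ (s 0 - 2) * ((s 1).descFactorial 2 * y ^ (s 1 - 2)) * z ^ s 2
          + (s 0).descFactorial 2 * x ^ (s 0 - 2) * ((s 2).descFactorial 2 * z ^ (s 2 - 2)) * y ^ s 1
          + (s 1).descFactorial 2 * y ^ (s 1 - 2) * ((s 2).descFactorial 2 * z ^ (s 2 - 2)) * x ^ s 0)) := by
  simp only [biharmPoly, pderiv_iterate_monomial, map_add, map_mul, map_ofNat, evalP3]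
  simp only [eval_vecCons_monomial, Finsupp.tsub_apply, Finsupp.single_eq_same,
    Finsupp.single_eq_of_ne, ne_eq, Fin.reduceEq, not_false_eq_true, tsub_zero]
  ring

theorem stencil25_monomial (s : Fin 3 →₀ ℕ) (hs : s.degree ≤ 5) (a x y z h : ℝ) :
    stencil25 (evalP3 (monomial s a)) x y z h = h ^ 4 * evalP3 (biharmPoly (monomial s a)) x y z := by
  rw [Finsupp.degree_eq_sum, Fin.sum_univ_three] at hs
  have hu : evalP3 (monomial s a) = fun x y z => a * (x ^ s 0 * y ^ s 1 * z ^ s 2) :=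
    funext₃ fun x y z => eval_vecCons_monomial s a x y z
  rw [hu, stencil25_const_mul, stencil25_mul (· ^ s 0) (· ^ s 1) (· ^ s 2),
    fourthDiff_pow_of_le_five (n := s 0) (by omega), fourthDiff_pow_of_le_five (n := s 1) (by omega),
    fourthDiff_pow_of_le_five (n := s 2) (by omega), secondDiff_pow_mul_secondDiff_pow (by omega),
    secondDiff_pow_mul_secondDiff_pow (by omega), secondDiff_pow_mul_secondDiff_pow (by omega),
    evalP3_biharmPoly_monomial]
  ring

theorem stencil25_exact_on_quintics_general
    (p : MvPolynomial (Fin 3) ℝ) (hp : p.totalDegree ≤ 5) (x y z h : ℝ) :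
    42 * evalP3 p x y z
      - 12 * (evalP3 p (x + h) y z + evalP3 p (x - h) y z
            + evalP3 p x (y + h) z + evalP3 p x (y - h) z
            + evalP3 p x y (z + h) + evalP3 p x y (z - h))
      + (evalP3 p (x + 2 * h) y z + evalP3 p (x - 2 * h) y z
       + evalP3 p x (y + 2 * h) z + evalP3 p x (y - 2 * h) z
       + evalP3 p x y (z + 2 * h) + evalP3 p x y (z - 2 * h))
      + 2 * (evalP3 p (x + h) (y + h) z + evalP3 p (x + h) (y - h) z
           + evalP3 p (x - h) (y + h) z + evalP3 p (x - h) (y - h) z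
           + evalP3 p (x + h) y (z + h) + evalP3 p (x + h) y (z - h)
           + evalP3 p (x - h) y (z + h) + evalP3 p (x - h) y (z - h)
           + evalP3 p x (y + h) (z + h) + evalP3 p x (y + h) (z - h)
           + evalP3 p x (y - h) (z + h) + evalP3 p x (y - h) (z - h))
    = h ^ 4 * evalP3 (biharmPoly p) x y z := by
  have hp_sum : evalP3 p = fun a b c => ∑ s ∈ p.support, evalP3 (monomial s (coeff s p)) a b c := by
    funext a b c
    rw [← evalP3_sum, ← p.as_sum]
  change stencil25 (evalP3 p) x y z h = _
  rw [hp_sum, stencil25_sum, Finset.sum_congr rfl fun s hs =>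
      stencil25_monomial s ((le_totalDegree hs).trans hp) _ x y z h,
    ← Finset.mul_sum, ← evalP3_sum, ← biharmPoly_sum, ← p.as_sum]

/-- The 3D 25-point biharmonic stencil is exact on polynomials of total
degree ≤ 5: its value equals `h⁴ (Δ²u)(P)`. -/
theorem stencil25_exact_on_quintics
    (p : MvPolynomial (Fin 3) ℝ) (hp : p.totalDegree ≤ 5) (x y z h : ℝ)
    (hh : 0 < h) :
    42 * evalP3 p x y z
      - 12 * (evalP3 p (x + h) y z + evalP3 p (x - h) y z
            + evalP3 p x (y + h) z + evalP3 p x (y - h) z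
            + evalP3 p x y (z + h) + evalP3 p x y (z - h))
      + (evalP3 p (x + 2 * h) y z + evalP3 p (x - 2 * h) y z
       + evalP3 p x (y + 2 * h) z + evalP3 p x (y - 2 * h) z
       + evalP3 p x y (z + 2 * h) + evalP3 p x y (z - 2 * h))
      + 2 * (evalP3 p (x + h) (y + h) z + evalP3 p (x + h) (y - h) z
           + evalP3 p (x - h) (y + h) z + evalP3 p (x - h) (y - h) z
           + evalP3 p (x + h) y (z + h) + evalP3 p (x + h) y (z - h)
           + evalP3 p (x - h) y (z + h) + evalP3 p (x - h) y (z - h)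
           + evalP3 p x (y + h) (z + h) + evalP3 p x (y + h) (z - h)
           + evalP3 p x (y - h) (z + h) + evalP3 p x (y - h) (z - h))
    = h ^ 4 * evalP3 (biharmPoly p) x y z :=
  stencil25_exact_on_quintics_general p hp x y z h
end
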